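/- arXiv:1509.03812 — 2 statements merged into one kernel-verified Lean document; each statement's English description precedes it below -/
import Mathlib

section
/- Suppose H = H_1 ⊕ H_2 ⊕ ⋯ ⊕ H_l is an internal orthogonal direct sum of nonzero subspaces such that every a'_i lies in some H_k and every b_i lies in some H_k. Then for each k, the vectors {b_i : b_i ∈ H_k} form an orthonormal basis of H_k (and likewise for the a'_j), and η(𝒜',ℬ) = max_{1≤k≤l} η(𝒜'|_{H_k}, ℬ|_{H_k}), where η(𝒜'|_{H_k}, ℬ|_{H_k}) is the state-independent disturbance of the projective measurements on H_k given by those basis vectors a'_j and b_i that lie in H_k. -/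
/-!
Each term `tr(ρ D_i)` of the disturbance depends on `ρ` only through the values `⟪v, ρ v⟫` at
`v = b_i` and at the `a'_j`, and only the `a'_j` lying in the block `H_k` of `b_i` contribute.
So a state `σ` on `H_k`, extended by zero to `H`, produces on `H` the same terms as on `H_k`.
Conversely, for a state `ρ` on `H` and the inclusion `ι` of the block `H_k` of `b_i`, the
compression `ι† ρ ι` is a positive operator of trace `t ≤ 1` producing the same term at `b_i`;
rescaling it to a state on `H_k` bounds that term by `t · η_k ≤ η_k`, where `η_k` is the
disturbance of the restricted measurements.
-/

open scoped ComplexInnerProductSpace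

noncomputable section

variable {H : Type*} [NormedAddCommGroup H] [InnerProductSpace ℂ H] [FiniteDimensional ℂ H]
variable {ι ι' : Type*} [Fintype ι] [Fintype ι']

/-- The rank-one projector `|v⟩⟨v|`. -/
def ketbra (v : H) : H →ₗ[ℂ] H where
  toFun x := ⟪v, x⟫ • v
  map_add' x y := by simp [inner_add_right, add_smul]
  map_smul' c x := by simp [inner_smul_right, mul_smul]

/-- A density operator: self-adjoint, positive semidefinite, trace one. -/
def IsDensity (ρ : H →ₗ[ℂ] H) : Prop :=
  LinearMap.IsSymmetric ρ ∧ (∀ x : H, 0 ≤ (⟪x, ρ x⟫).re) ∧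
    LinearMap.trace ℂ H ρ = 1

/-- The state-dependent error `ε_ρ(𝒜,𝒜')`. -/
def sdError (a a' : ι → H) (ρ : H →ₗ[ℂ] H) : ℝ :=
  ⨆ i : ι, ‖LinearMap.trace ℂ H (ρ ∘ₗ (ketbra (a i) - ketbra (a' i)))‖

/-- The state-independent error `ε(𝒜,𝒜')`. -/
def siError (a a' : ι → H) : ℝ :=
  ⨆ ρ : {ρ : H →ₗ[ℂ] H // IsDensity ρ}, sdError a a' ρ.1

/-- The operator `|b_i⟩⟨b_i| − Σ_j |⟨a'_j, b_i⟩|² |a'_j⟩⟨a'_j|`. -/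
def distOp (a' : ι' → H) (b : ι → H) (i : ι) : H →ₗ[ℂ] H :=
  ketbra (b i) - ∑ j : ι', (‖⟪a' j, b i⟫‖ ^ 2 : ℂ) • ketbra (a' j)

/-- The state-dependent disturbance `η_ρ(𝒜',ℬ)`. -/
def sdDist (a' : ι' → H) (b : ι → H) (ρ : H →ₗ[ℂ] H) : ℝ :=
  ⨆ i : ι, ‖LinearMap.trace ℂ H (ρ ∘ₗ distOp a' b i)‖

/-- The state-independent disturbance `η(𝒜',ℬ)`. -/
def siDist (a' : ι' → H) (b : ι → H) : ℝ :=
  ⨆ ρ : {ρ : H →ₗ[ℂ] H // IsDensity ρ}, sdDist a' b ρ.1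

/-- The state-independent overall error `Δ(𝒜,𝒜',ℬ)`. -/
def siOverall (a a' b : ι → H) : ℝ :=
  ⨆ ρ : {ρ : H →ₗ[ℂ] H // IsDensity ρ}, (sdError a a' ρ.1 + sdDist a' b ρ.1)


open scoped ComplexOrder

section Operators

variable {E : Type*} [NormedAddCommGroup E] [InnerProductSpace ℂ E] {ι ι' : Type*}

lemma isDensity_iff_isPositive {ρ : E →ₗ[ℂ] E} :
    IsDensity ρ ↔ ρ.IsPositive ∧ LinearMap.trace ℂ E ρ = 1 := by
  simp only [IsDensity, LinearMap.IsPositive, and_assoc, inner_re_symm (ρ _),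
    RCLike.re_to_complex]

lemma sdDist_nonneg [Fintype ι'] (a' : ι' → E) (b : ι → E) (ρ : E →ₗ[ℂ] E) :
    0 ≤ sdDist a' b ρ :=
  Real.iSup_nonneg fun _ => norm_nonneg _

lemma siDist_nonneg [Fintype ι'] (a' : ι' → E) (b : ι → E) : 0 ≤ siDist a' b :=
  Real.iSup_nonneg fun ρ => sdDist_nonneg a' b ρ.1

lemma IsDensity.norm_inner_le_one [Fintype ι] {ρ : E →ₗ[ℂ] E} (hρ : IsDensity ρ)
    (e : OrthonormalBasis ι ℂ E) (i : ι) : ‖⟪e i, ρ (e i)⟫‖ ≤ 1 := by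
  rw [isDensity_iff_isPositive] at hρ
  have hle : ⟪e i, ρ (e i)⟫ ≤ 1 := by
    rw [← hρ.2, LinearMap.trace_eq_sum_inner ρ e]
    exact Finset.single_le_sum (fun j _ => hρ.1.inner_nonneg_right (e j)) (Finset.mem_univ i)
  simpa using CStarAlgebra.norm_le_norm_of_nonneg_of_le (hρ.1.inner_nonneg_right _) hle

variable [FiniteDimensional ℂ E]

lemma trace_comp_ketbra (ρ : E →ₗ[ℂ] E) (v : E) :
    LinearMap.trace ℂ E (ρ ∘ₗ ketbra v) = ⟪v, ρ v⟫ := by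
  have : ρ ∘ₗ ketbra v = (InnerProductSpace.rankOne ℂ (ρ v) v : E →L[ℂ] E) := by
    ext x
    simp [ketbra]
  rw [this, InnerProductSpace.trace_rankOne]

lemma trace_comp_distOp [Fintype ι'] (ρ : E →ₗ[ℂ] E) (a' : ι' → E) (b : ι → E) (i : ι) :
    LinearMap.trace ℂ E (ρ ∘ₗ distOp a' b i)
      = ⟪b i, ρ (b i)⟫ - ∑ j, (‖⟪a' j, b i⟫‖ ^ 2 : ℂ) * ⟪a' j, ρ (a' j)⟫ := by
  rw [distOp, ← Module.End.mul_eq_comp, mul_sub, Finset.mul_sum]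
  simp only [mul_smul_comm, map_sub, map_sum, map_smul, Module.End.mul_eq_comp,
    trace_comp_ketbra, smul_eq_mul]

lemma LinearMap.IsPositive.eq_zero_of_trace_eq_zero {T : E →ₗ[ℂ] E} (hT : T.IsPositive)
    (h : LinearMap.trace ℂ E T = 0) : T = 0 := by
  classical
  let e := stdOrthonormalBasis ℂ E
  rw [LinearMap.trace_eq_matrix_trace ℂ e.toBasis] at h
  have hA := ((LinearMap.posSemidef_toMatrix_iff e).mpr hT).trace_eq_zero_iff.mp h
  exact (LinearMap.toMatrix e.toBasis e.toBasis).injective (by rw [hA, map_zero])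

lemma IsDensity.norm_trace_comp_distOp_le_two [Fintype ι] [Fintype ι'] {ρ : E →ₗ[ℂ] E}
    (hρ : IsDensity ρ) (a' : OrthonormalBasis ι' ℂ E) (b : OrthonormalBasis ι ℂ E) (i : ι) :
    ‖LinearMap.trace ℂ E (ρ ∘ₗ distOp a' b i)‖ ≤ 2 := by
  rw [trace_comp_distOp]
  calc _ ≤ ‖⟪b i, ρ (b i)⟫‖ + ∑ j, ‖⟪a' j, b i⟫‖ ^ 2 * ‖⟪a' j, ρ (a' j)⟫‖ := by
        refine (norm_sub_le _ _).trans (add_le_add_right ((norm_sum_le _ _).trans_eq ?_) _)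
        simp
    _ ≤ 1 + ∑ j, ‖⟪a' j, b i⟫‖ ^ 2 * 1 := by
        gcongr with j
        · exact hρ.norm_inner_le_one b i
        · exact hρ.norm_inner_le_one a' j
    _ = 2 := by
        rw [← Finset.sum_mul, a'.sum_sq_norm_inner_right, b.norm_eq_one]
        norm_num

lemma bddAbove_range_sdDist [Fintype ι] [Fintype ι'] (a' : OrthonormalBasis ι' ℂ E)
    (b : OrthonormalBasis ι ℂ E) :
    BddAbove (Set.range fun ρ : {ρ : E →ₗ[ℂ] E // IsDensity ρ} => sdDist a' b ρ.1) :=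
  ⟨2, by
    rintro _ ⟨ρ, rfl⟩
    exact Real.iSup_le (fun i => ρ.2.norm_trace_comp_distOp_le_two a' b i) (by norm_num)⟩

lemma IsDensity.norm_trace_comp_distOp_le_siDist [Fintype ι] [Fintype ι'] {ρ : E →ₗ[ℂ] E}
    (hρ : IsDensity ρ) (a' : OrthonormalBasis ι' ℂ E) (b : OrthonormalBasis ι ℂ E) (i : ι) :
    ‖LinearMap.trace ℂ E (ρ ∘ₗ distOp a' b i)‖ ≤ siDist a' b :=
  (le_ciSup (Set.finite_range _).bddAbove i).trans
    (le_ciSup (bddAbove_range_sdDist a' b) ⟨ρ, hρ⟩)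

/-- Rescale `σ` to the state `σ / tr σ`; a positive operator of trace zero vanishes. -/
lemma LinearMap.IsPositive.norm_trace_comp_distOp_le_norm_trace_mul_siDist [Fintype ι]
    [Fintype ι'] {σ : E →ₗ[ℂ] E} (hσ : σ.IsPositive) (a' : OrthonormalBasis ι' ℂ E)
    (b : OrthonormalBasis ι ℂ E) (i : ι) :
    ‖trace ℂ E (σ ∘ₗ distOp a' b i)‖ ≤ ‖trace ℂ E σ‖ * siDist a' b := by
  set t := trace ℂ E σ
  obtain h | h := eq_or_ne t 0
  · simpa [hσ.eq_zero_of_trace_eq_zero h] using mul_nonneg (norm_nonneg t) (siDist_nonneg a' b)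
  have hρ : IsDensity (t⁻¹ • σ) := isDensity_iff_isPositive.mpr
    ⟨hσ.smul_of_nonneg (inv_nonneg.mpr hσ.trace_nonneg), by
      rw [map_smul, smul_eq_mul, inv_mul_cancel₀ h]⟩
  calc ‖trace ℂ E (σ ∘ₗ distOp a' b i)‖
      = ‖t‖ * ‖trace ℂ E ((t⁻¹ • σ) ∘ₗ distOp a' b i)‖ := by
        rw [smul_comp, map_smul, smul_eq_mul, ← norm_mul, ← mul_assoc, mul_inv_cancel₀ h, one_mul]
    _ ≤ ‖t‖ * siDist a' b := by
        gcongr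
        exact hρ.norm_trace_comp_distOp_le_siDist a' b i

end Operators

namespace Submodule

variable {E : Type*} [NormedAddCommGroup E] [InnerProductSpace ℂ E] [FiniteDimensional ℂ E]
  (K : Submodule ℂ E)

def compression (ρ : E →ₗ[ℂ] E) : K →ₗ[ℂ] K := K.subtype.adjoint ∘ₗ ρ ∘ₗ K.subtype

def extendByZero (σ : K →ₗ[ℂ] K) : E →ₗ[ℂ] E := K.subtype ∘ₗ σ ∘ₗ K.subtype.adjoint

lemma adjoint_subtype_comp_subtype : K.subtype.adjoint ∘ₗ K.subtype = LinearMap.id :=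
  LinearMap.ext fun v => ext_inner_left ℂ fun w => by
    rw [LinearMap.comp_apply, LinearMap.adjoint_inner_right]
    rfl

lemma inner_compression_apply (ρ : E →ₗ[ℂ] E) (v w : K) :
    ⟪v, K.compression ρ w⟫ = ⟪(v : E), ρ w⟫ :=
  LinearMap.adjoint_inner_right K.subtype v (ρ w)

lemma compression_extendByZero (σ : K →ₗ[ℂ] K) : K.compression (K.extendByZero σ) = σ := by
  change (K.subtype.adjoint ∘ₗ K.subtype) ∘ₗ σ ∘ₗ (K.subtype.adjoint ∘ₗ K.subtype) = σ
  rw [adjoint_subtype_comp_subtype, LinearMap.id_comp, LinearMap.comp_id]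

lemma trace_extendByZero (σ : K →ₗ[ℂ] K) :
    LinearMap.trace ℂ E (K.extendByZero σ) = LinearMap.trace ℂ K σ := by
  rw [extendByZero, LinearMap.trace_comp_comm', LinearMap.comp_assoc,
    adjoint_subtype_comp_subtype, LinearMap.comp_id]

end Submodule

namespace LinearMap.IsPositive

variable {E : Type*} [NormedAddCommGroup E] [InnerProductSpace ℂ E] [FiniteDimensional ℂ E]
  {K : Submodule ℂ E}

lemma compression {ρ : E →ₗ[ℂ] E} (hρ : ρ.IsPositive) : (K.compression ρ).IsPositive :=
  hρ.adjoint_conj K.subtype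

lemma extendByZero {σ : K →ₗ[ℂ] K} (hσ : σ.IsPositive) : (K.extendByZero σ).IsPositive :=
  hσ.conj_adjoint K.subtype

/-- With `P = ι ι†` the projection onto `K` and `Q = 1 - P = Q† = Q Q`, the defect
`tr ρ - tr (ι† ρ ι) = tr (ρ Q)` is the trace of the positive operator `Q ρ Q†`. -/
lemma trace_compression_le {ρ : E →ₗ[ℂ] E} (hρ : ρ.IsPositive) :
    trace ℂ K (K.compression ρ) ≤ trace ℂ E ρ := by
  set P := K.subtype ∘ₗ K.subtype.adjoint
  set Q := LinearMap.id - P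
  have hPP : P ∘ₗ P = P := by
    change K.subtype ∘ₗ (K.subtype.adjoint ∘ₗ K.subtype) ∘ₗ K.subtype.adjoint = P
    rw [K.adjoint_subtype_comp_subtype, id_comp]
  have hQ : Q.adjoint = Q := by
    simp only [Q, P, map_sub, adjoint_id, adjoint_comp, adjoint_adjoint]
  have hQQ : Q ∘ₗ Q = Q := by
    simp only [Q, sub_comp, comp_sub, id_comp, comp_id, hPP, sub_self, sub_zero]
  have hdefect : trace ℂ E ρ - trace ℂ K (K.compression ρ) = trace ℂ E (Q ∘ₗ ρ ∘ₗ Q.adjoint) := by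
    rw [Submodule.compression, trace_comp_comm' (ρ ∘ₗ K.subtype), hQ, trace_comp_comm' (ρ ∘ₗ Q),
      comp_assoc (g := Q), hQQ, comp_sub, comp_id, map_sub]
    rfl
  exact sub_nonneg.mp (hdefect ▸ (hρ.conj_adjoint Q).trace_nonneg)

end LinearMap.IsPositive

lemma IsDensity.extendByZero {E : Type*} [NormedAddCommGroup E] [InnerProductSpace ℂ E]
    [FiniteDimensional ℂ E] {K : Submodule ℂ E} {σ : K →ₗ[ℂ] K} (hσ : IsDensity σ) :
    IsDensity (K.extendByZero σ) := by
  rw [isDensity_iff_isPositive] at hσ ⊢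
  exact ⟨hσ.1.extendByZero, (K.trace_extendByZero σ).trans hσ.2⟩

section Blocks

variable {E : Type*} [NormedAddCommGroup E] [InnerProductSpace ℂ E]
  {L : Type*} {V : L → Submodule ℂ E} {ι : Type*}

def restrictBlock {κ : ι → L} (v : ι → E) (hv : ∀ j, v j ∈ V (κ j)) (k : L) :
    {j // κ j = k} → V k :=
  fun j => ⟨v j, by simpa only [j.2] using hv j.1⟩

@[simp]
lemma coe_restrictBlock_apply {κ : ι → L} (v : ι → E) (hv : ∀ j, v j ∈ V (κ j)) (k : L)
    (j : {j // κ j = k}) : (restrictBlock v hv k j : E) = v j :=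
  rfl

lemma orthonormal_restrictBlock {κ : ι → L} {v : ι → E} (hv : Orthonormal ℂ v)
    (hmem : ∀ j, v j ∈ V (κ j)) (k : L) : Orthonormal ℂ (restrictBlock v hmem k) := by
  have h := hv.comp _ (Subtype.val_injective (p := fun j => κ j = k))
  exact ⟨fun j => by simpa using h.1 j, fun i j hij => by simpa [Submodule.coe_inner] using h.2 hij⟩

lemma top_le_span_restrictBlock [FiniteDimensional ℂ E] [Fintype ι]
    (horth : Pairwise fun k k' => V k ⟂ V k') {κ : ι → L} (e : OrthonormalBasis ι ℂ E)
    (he : ∀ j, e j ∈ V (κ j)) (k : L) :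
    ⊤ ≤ Submodule.span ℂ (Set.range (restrictBlock e he k)) := by
  refine (Submodule.orthogonal_eq_bot_iff.mp ((Submodule.eq_bot_iff _).mpr fun y hy => ?_)).ge
  refine Subtype.ext (InnerProductSpace.ext_inner_left_basis e.toBasis fun j => ?_)
  rw [e.coe_toBasis, ZeroMemClass.coe_zero, inner_zero_right]
  by_cases hj : κ j = k
  · exact (Submodule.mem_orthogonal _ y).mp hy _ (Submodule.subset_span ⟨⟨j, hj⟩, rfl⟩)
  · exact (horth hj).inner_eq (he j) y.2

variable [FiniteDimensional ℂ E] [Fintype ι] [DecidableEq L]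

def OrthonormalBasis.restrictBlock (horth : Pairwise fun k k' => V k ⟂ V k') {κ : ι → L}
    (e : OrthonormalBasis ι ℂ E) (he : ∀ j, e j ∈ V (κ j)) (k : L) :
    OrthonormalBasis {j // κ j = k} ℂ (V k) :=
  .mk (orthonormal_restrictBlock e.orthonormal he k) (top_le_span_restrictBlock horth e he k)

@[simp]
lemma OrthonormalBasis.coe_restrictBlock (horth : Pairwise fun k k' => V k ⟂ V k')
    {κ : ι → L} (e : OrthonormalBasis ι ℂ E) (he : ∀ j, e j ∈ V (κ j)) (k : L) :
    ⇑(e.restrictBlock horth he k) = _root_.restrictBlock e he k :=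
  OrthonormalBasis.coe_mk _ _

end Blocks

section Reduction

variable {E : Type*} [NormedAddCommGroup E] [InnerProductSpace ℂ E] [FiniteDimensional ℂ E]
  {L : Type*} [DecidableEq L] {V : L → Submodule ℂ E} {ι ι' : Type*} [Fintype ι']
  {κ : ι' → L} {μ : ι → L}

/-- Only the `a' j` in the block of `b i` contribute, the others being orthogonal to `b i`. -/
lemma trace_comp_distOp_restrictBlock (horth : Pairwise fun k k' => V k ⟂ V k')
    {a' : ι' → E} {b : ι → E} (ha' : ∀ j, a' j ∈ V (κ j)) (hb : ∀ i, b i ∈ V (μ i)) {k : L}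
    {σ : V k →ₗ[ℂ] V k} {ρ : E →ₗ[ℂ] E} (hσρ : ∀ v : V k, ⟪v, σ v⟫ = ⟪(v : E), ρ v⟫)
    (i : {i // μ i = k}) :
    LinearMap.trace ℂ (V k) (σ ∘ₗ distOp (restrictBlock a' ha' k) (restrictBlock b hb k) i) =
      LinearMap.trace ℂ E (ρ ∘ₗ distOp a' b i) := by
  simp only [trace_comp_distOp, hσρ, Submodule.coe_inner, coe_restrictBlock_apply]
  congr 1
  rw [← Fintype.sum_subtype_add_sum_subtype (fun j => κ j = k), left_eq_add]
  refine Finset.sum_eq_zero fun j _ => ?_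
  rw [(horth fun h => j.2 (h.trans i.2)).inner_eq (ha' j) (hb i)]
  simp

variable [Fintype ι]

lemma siDist_restrictBlock_le (horth : Pairwise fun k k' => V k ⟂ V k')
    (a' : OrthonormalBasis ι' ℂ E) (b : OrthonormalBasis ι ℂ E) (ha' : ∀ j, a' j ∈ V (κ j))
    (hb : ∀ i, b i ∈ V (μ i)) (k : L) :
    siDist (restrictBlock a' ha' k) (restrictBlock b hb k) ≤ siDist a' b := by
  refine Real.iSup_le (fun σ => Real.iSup_le (fun i => ?_) (siDist_nonneg _ _))
    (siDist_nonneg _ _)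
  have hσρ (v : V k) : ⟪v, σ.1 v⟫ = ⟪(v : E), (V k).extendByZero σ.1 v⟫ := by
    conv_lhs => rw [← (V k).compression_extendByZero σ.1]
    exact (V k).inner_compression_apply _ v v
  rw [trace_comp_distOp_restrictBlock horth ha' hb hσρ]
  exact σ.2.extendByZero.norm_trace_comp_distOp_le_siDist a' b i

lemma siDist_le_iSup_siDist_restrictBlock [Finite L] (horth : Pairwise fun k k' => V k ⟂ V k')
    (a' : OrthonormalBasis ι' ℂ E) (b : OrthonormalBasis ι ℂ E) (ha' : ∀ j, a' j ∈ V (κ j))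
    (hb : ∀ i, b i ∈ V (μ i)) :
    siDist a' b ≤ ⨆ k, siDist (restrictBlock a' ha' k) (restrictBlock b hb k) := by
  have hsup_nonneg := Real.iSup_nonneg fun k =>
    siDist_nonneg (restrictBlock a' ha' k) (restrictBlock b hb k)
  refine Real.iSup_le (fun ρ => Real.iSup_le (fun i => ?_) hsup_nonneg) hsup_nonneg
  obtain ⟨hρ, htr⟩ := isDensity_iff_isPositive.mp ρ.2
  set K := V (μ i)
  have htr_le : ‖LinearMap.trace ℂ K (K.compression ρ.1)‖ ≤ 1 := by
    simpa [htr] using CStarAlgebra.norm_le_norm_of_nonneg_of_le hρ.compression.trace_nonneg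
      hρ.trace_compression_le
  calc ‖LinearMap.trace ℂ E (ρ.1 ∘ₗ distOp a' b i)‖
      = ‖LinearMap.trace ℂ K (K.compression ρ.1 ∘ₗ
          distOp (restrictBlock a' ha' _) (restrictBlock b hb _) ⟨i, rfl⟩)‖ := by
        rw [trace_comp_distOp_restrictBlock horth ha' hb fun v => K.inner_compression_apply ρ.1 v v]
    _ ≤ ‖LinearMap.trace ℂ K (K.compression ρ.1)‖ *
          siDist (restrictBlock a' ha' (μ i)) (restrictBlock b hb (μ i)) := by
        simpa using hρ.compression.norm_trace_comp_distOp_le_norm_trace_mul_siDist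
          (a'.restrictBlock horth ha' (μ i)) (b.restrictBlock horth hb (μ i)) ⟨i, rfl⟩
    _ ≤ ⨆ k, siDist (restrictBlock a' ha' k) (restrictBlock b hb k) := by
        refine (mul_le_of_le_one_left (siDist_nonneg _ _) htr_le).trans ?_
        exact le_ciSup (f := fun k => siDist (restrictBlock a' ha' k) (restrictBlock b hb k))
          (Set.finite_range _).bddAbove (μ i)

end Reduction

/-- reducibility of the disturbance with respect to an orthogonal direct sum
decomposition compatible with both bases. -/
theorem disturbance_reducibility {d l : ℕ}
    (a' b : OrthonormalBasis (Fin d) ℂ H)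
    (V : Fin l → Submodule ℂ H)
    (horth : ∀ k k', k ≠ k' → ∀ x ∈ V k, ∀ y ∈ V k', ⟪x, y⟫ = 0)
    (κ μ : Fin d → Fin l)
    (ha' : ∀ j, a' j ∈ V (κ j)) (hb : ∀ i, b i ∈ V (μ i)) :
    (∀ k : Fin l,
      (∃ B' : OrthonormalBasis {j : Fin d // κ j = k} ℂ (V k), ∀ j, (B' j : H) = a' j.1) ∧
      (∃ B : OrthonormalBasis {i : Fin d // μ i = k} ℂ (V k), ∀ i, (B i : H) = b i.1)) ∧
    siDist (⇑a') (⇑b) = ⨆ k : Fin l,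
      siDist (fun j : {j : Fin d // κ j = k} => (⟨a' j.1, by have h := ha' j.1; rwa [j.2] at h⟩ : V k))
             (fun i : {i : Fin d // μ i = k} => (⟨b i.1, by have h := hb i.1; rwa [i.2] at h⟩ : V k)) := by
  have hortho : Pairwise fun k k' => V k ⟂ V k' := fun k k' h =>
    Submodule.isOrtho_iff_inner_eq.mpr (horth k k' h)
  refine ⟨fun k => ⟨⟨a'.restrictBlock hortho ha' k, by simp⟩,
    ⟨b.restrictBlock hortho hb k, by simp⟩⟩, ?_⟩
  exact le_antisymm (siDist_le_iSup_siDist_restrictBlock hortho a' b ha' hb)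
    (Real.iSup_le (siDist_restrictBlock_le hortho a' b ha' hb) (siDist_nonneg _ _))
end
end

section
/- The state-independent disturbance satisfies the upper bound η(𝒜',ℬ) ≤ max_{1≤i≤d} √( (1 − 1/d) · (1 − Σ_{k=1}^d |⟨a'_k, b_i⟩|⁴) ). -/
open scoped ComplexInnerProductSpace

noncomputable section

variable {H : Type*} [NormedAddCommGroup H] [InnerProductSpace ℂ H] [FiniteDimensional ℂ H]
variable {ι ι' : Type*} [Fintype ι] [Fintype ι']

/-!
Fix `i` and write `D` for the disturbance operator of `b i`. In the basis `a'` the matrix of `D` is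
`u u* - diag(|u|²)` with `u_l = ⟪a'_l, b_i⟫`, so its diagonal vanishes and `tr(ρD)` only sees the
off-diagonal entries of `ρ`. Cauchy–Schwarz bounds `|tr(ρD)|` by the product of the square roots of
the off-diagonal masses `∑_{k≠l} |·_kl|²`. For `D` this mass is `∑_{k≠l} p_k p_l = 1 - ∑ p_k²` with
`p_k = |u_k|²`; for `ρ`, positivity gives `|ρ_kl|² ≤ ρ_kk ρ_ll`, so its mass is at most
`∑_{k≠l} ρ_kk ρ_ll = 1 - ∑ ρ_kk² ≤ 1 - 1/d`.
-/

open Finset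

theorem Finset.sum_product_self_eq_sum_add_sum_offDiag {α M : Type*} [DecidableEq α]
    [AddCommMonoid M] (s : Finset α) (f : α × α → M) :
    ∑ x ∈ s ×ˢ s, f x = ∑ a ∈ s, f (a, a) + ∑ x ∈ s.offDiag, f x := by
  rw [← s.diag_union_offDiag, sum_union s.disjoint_diag_offDiag, sum_diag]

theorem Finset.sum_offDiag_mul {α R : Type*} [DecidableEq α] [CommRing R] (s : Finset α)
    (f : α → R) :
    ∑ x ∈ s.offDiag, f x.1 * f x.2 = (∑ a ∈ s, f a) ^ 2 - ∑ a ∈ s, f a ^ 2 := by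
  rw [sq, sum_mul_sum, ← sum_product' s s (fun a b => f a * f b),
    sum_product_self_eq_sum_add_sum_offDiag]
  simp only [sq, add_sub_cancel_left]

section

variable {E n : Type*} [NormedAddCommGroup E] [InnerProductSpace ℂ E] [Fintype n]

theorem LinearMap.trace_comp_eq_sum_inner_mul_inner (c : OrthonormalBasis n ℂ E)
    (f g : E →ₗ[ℂ] E) :
    trace ℂ E (f ∘ₗ g) = ∑ k, ∑ l, ⟪c k, f (c l)⟫ * ⟪c l, g (c k)⟫ := by
  rw [trace_eq_sum_inner _ c]
  refine sum_congr rfl fun k _ => ?_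
  conv_lhs => rw [comp_apply, ← c.sum_repr' (g (c k)), map_sum, inner_sum]
  simp only [map_smul, inner_smul_right, mul_comm]

theorem LinearMap.trace_comp_eq_sum_offDiag [DecidableEq n] (c : OrthonormalBasis n ℂ E)
    (f g : E →ₗ[ℂ] E) (hg : ∀ k, ⟪c k, g (c k)⟫ = 0) :
    trace ℂ E (f ∘ₗ g) = ∑ x ∈ univ.offDiag, ⟪c x.1, f (c x.2)⟫ * ⟪c x.2, g (c x.1)⟫ := by
  rw [trace_comp_eq_sum_inner_mul_inner c, ← sum_product' univ univ
    (fun k l => ⟪c k, f (c l)⟫ * ⟪c l, g (c k)⟫), sum_product_self_eq_sum_add_sum_offDiag]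
  simp only [hg, mul_zero, sum_const_zero, zero_add]

theorem LinearMap.norm_trace_comp_le_of_diag_eq_zero [DecidableEq n]
    (c : OrthonormalBasis n ℂ E) (f g : E →ₗ[ℂ] E) (hg : ∀ k, ⟪c k, g (c k)⟫ = 0) :
    ‖trace ℂ E (f ∘ₗ g)‖ ≤ √(∑ x ∈ univ.offDiag, ‖⟪c x.1, f (c x.2)⟫‖ ^ 2) *
      √(∑ x ∈ univ.offDiag, ‖⟪c x.2, g (c x.1)⟫‖ ^ 2) := by
  rw [trace_comp_eq_sum_offDiag c f g hg]
  refine (norm_sum_le _ _).trans ?_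
  simp only [norm_mul]
  exact Real.sum_mul_le_sqrt_mul_sqrt _ _ _

namespace IsDensity

variable {ρ : E →ₗ[ℂ] E}

theorem norm_inner_sq_le (hρ : IsDensity ρ) (x y : E) :
    ‖⟪x, ρ y⟫‖ ^ 2 ≤ (⟪x, ρ x⟫).re * (⟪y, ρ y⟫).re := by
  obtain ⟨hsym, hpos, -⟩ := hρ
  let form : PreInnerProductSpace.Core ℂ E :=
    { inner := fun u w => ⟪u, ρ w⟫
      conj_inner_symm := fun u w => by rw [inner_conj_symm]; exact hsym u w
      re_inner_nonneg := hpos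
      add_left := fun u w z => inner_add_left u w (ρ z)
      smul_left := fun u w r => inner_smul_left u (ρ w) r }
  have h := @InnerProductSpace.Core.inner_mul_inner_self_le ℂ E _ _ _ form x y
  have hyx : ⟪y, ρ x⟫ = (starRingEnd ℂ) ⟪x, ρ y⟫ := by rw [inner_conj_symm, hsym]
  change ‖⟪x, ρ y⟫‖ * ‖⟪y, ρ x⟫‖ ≤ _ at h
  rwa [hyx, RCLike.norm_conj, ← sq] at h

theorem sum_re_inner (hρ : IsDensity ρ) (c : OrthonormalBasis n ℂ E) :
    ∑ k, (⟪c k, ρ (c k)⟫).re = 1 := by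
  rw [← Complex.re_sum, ← LinearMap.trace_eq_sum_inner, hρ.2.2, Complex.one_re]

theorem sum_offDiag_norm_inner_sq_le [DecidableEq n] (hρ : IsDensity ρ)
    (c : OrthonormalBasis n ℂ E) :
    ∑ x ∈ univ.offDiag, ‖⟪c x.1, ρ (c x.2)⟫‖ ^ 2 ≤ 1 - 1 / Fintype.card n := by
  set r : n → ℝ := fun k => (⟪c k, ρ (c k)⟫).re
  have hr : ∑ k, r k = 1 := hρ.sum_re_inner c
  have hcard : 1 / (Fintype.card n : ℝ) ≤ ∑ k, r k ^ 2 := by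
    refine div_le_of_le_mul₀ (Nat.cast_nonneg _) (sum_nonneg fun _ _ => sq_nonneg _) ?_
    have h := sq_sum_le_card_mul_sum_sq (s := univ) (f := r)
    rwa [hr, one_pow, card_univ, mul_comm] at h
  calc ∑ x ∈ univ.offDiag, ‖⟪c x.1, ρ (c x.2)⟫‖ ^ 2
      ≤ ∑ x ∈ univ.offDiag, r x.1 * r x.2 :=
        sum_le_sum fun x _ => hρ.norm_inner_sq_le (c x.1) (c x.2)
    _ = 1 - ∑ k, r k ^ 2 := by rw [sum_offDiag_mul, hr, one_pow]
    _ ≤ 1 - 1 / Fintype.card n := by linarith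

end IsDensity

theorem ketbra_apply (v x : E) : ketbra v x = ⟪v, x⟫ • v := rfl

theorem inner_distOp_apply [DecidableEq n] {α : Type*} {a' : n → E} (ha' : Orthonormal ℂ a')
    (b : α → E) (i : α) (k l : n) :
    ⟪a' l, distOp a' b i (a' k)⟫ = if l = k then 0 else ⟪a' l, b i⟫ * ⟪b i, a' k⟫ := by
  simp only [distOp, LinearMap.sub_apply, LinearMap.coe_sum, Finset.sum_apply,
    LinearMap.smul_apply, ketbra_apply, inner_sub_right, inner_sum, inner_smul_right,
    orthonormal_iff_ite.mp ha', mul_ite, mul_one, mul_zero, sum_ite_eq, mem_univ, if_true]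
  split_ifs with hlk
  · subst hlk
    rw [← inner_conj_symm (b i), Complex.conj_mul', sub_self]
  · rw [sub_zero, mul_comm]

theorem sum_offDiag_norm_inner_distOp_sq [DecidableEq n] (a' : OrthonormalBasis n ℂ E)
    {α : Type*} (b : α → E) (i : α) (hb : ‖b i‖ = 1) :
    ∑ x ∈ univ.offDiag, ‖⟪a' x.2, distOp a' b i (a' x.1)⟫‖ ^ 2 =
      1 - ∑ k, ‖⟪a' k, b i⟫‖ ^ 4 := by
  set p : n → ℝ := fun k => ‖⟪a' k, b i⟫‖ ^ 2
  have hp : ∑ k, p k = 1 := by simp only [p, a'.sum_sq_norm_inner_right, hb, one_pow]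
  calc ∑ x ∈ univ.offDiag, ‖⟪a' x.2, distOp a' b i (a' x.1)⟫‖ ^ 2
      = ∑ x ∈ univ.offDiag, p x.1 * p x.2 := by
        refine sum_congr rfl fun x hx => ?_
        rw [inner_distOp_apply a'.orthonormal, if_neg (mem_offDiag.mp hx).2.2.symm, norm_mul,
          norm_inner_symm (b i)]
        ring
    _ = 1 - ∑ k, ‖⟪a' k, b i⟫‖ ^ 4 := by
        rw [sum_offDiag_mul, hp]
        simp only [p, ← pow_mul, one_pow]

theorem IsDensity.norm_trace_comp_distOp_le {ρ : E →ₗ[ℂ] E} (hρ : IsDensity ρ)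
    (a' : OrthonormalBasis n ℂ E) {α : Type*} (b : α → E) (i : α) (hb : ‖b i‖ = 1) :
    ‖LinearMap.trace ℂ E (ρ ∘ₗ distOp a' b i)‖ ≤
      √((1 - 1 / Fintype.card n) * (1 - ∑ k, ‖⟪a' k, b i⟫‖ ^ 4)) := by
  classical
  have hdiag (k : n) : ⟪a' k, distOp a' b i (a' k)⟫ = 0 := by
    rw [inner_distOp_apply a'.orthonormal, if_pos rfl]
  set massD := ∑ x ∈ univ.offDiag, ‖⟪a' x.2, distOp a' b i (a' x.1)⟫‖ ^ 2
  calc ‖LinearMap.trace ℂ E (ρ ∘ₗ distOp a' b i)‖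
      ≤ √(∑ x ∈ univ.offDiag, ‖⟪a' x.1, ρ (a' x.2)⟫‖ ^ 2) * √massD :=
        LinearMap.norm_trace_comp_le_of_diag_eq_zero a' ρ _ hdiag
    _ ≤ √(1 - 1 / Fintype.card n) * √massD := by
        gcongr
        exact hρ.sum_offDiag_norm_inner_sq_le a'
    _ = √((1 - 1 / Fintype.card n) * (1 - ∑ k, ‖⟪a' k, b i⟫‖ ^ 4)) := by
        rw [← Real.sqrt_mul' _ (sum_nonneg fun _ _ => sq_nonneg _),
          sum_offDiag_norm_inner_distOp_sq a' b i hb]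

end

theorem disturbance_upper_bound_one_general {d : ℕ}
    (a' b : OrthonormalBasis (Fin d) ℂ H) :
    siDist (⇑a') (⇑b) ≤ ⨆ i : Fin d,
      Real.sqrt ((1 - 1 / (d : ℝ)) * (1 - ∑ k : Fin d, ‖⟪a' k, b i⟫‖ ^ 4)) := by
  set bound : Fin d → ℝ := fun i =>
    Real.sqrt ((1 - 1 / (d : ℝ)) * (1 - ∑ k : Fin d, ‖⟪a' k, b i⟫‖ ^ 4))
  have hbound_nonneg : 0 ≤ ⨆ i, bound i := Real.iSup_nonneg fun _ => Real.sqrt_nonneg _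
  refine Real.iSup_le (fun ρ => Real.iSup_le (fun i => ?_) hbound_nonneg) hbound_nonneg
  calc ‖LinearMap.trace ℂ H (ρ.1 ∘ₗ distOp a' b i)‖ ≤ bound i := by
        simpa only [Fintype.card_fin] using
          ρ.2.norm_trace_comp_distOp_le a' b i (b.orthonormal.1 i)
    _ ≤ ⨆ i, bound i := le_ciSup (Finite.bddAbove_range bound) i

/-- upper bound for the disturbance via the calibration disturbance. -/
theorem disturbance_upper_bound_one {d : ℕ} (hd : 2 ≤ d)
    (a' b : OrthonormalBasis (Fin d) ℂ H) :
    siDist (⇑a') (⇑b) ≤ ⨆ i : Fin d,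
      Real.sqrt ((1 - 1 / (d : ℝ)) * (1 - ∑ k : Fin d, ‖⟪a' k, b i⟫‖ ^ 4)) :=
  disturbance_upper_bound_one_general a' b
end
end
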